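/- Let g : [0, T] → [0, ∞) be continuous and C ≥ 0, and suppose ∫_0^T e^{−2pt} g(t) dt ≤ C ∫_0^T e^{−2pt} dt for all p ≥ p₀ (some p₀ > 0). Then g(0) ≤ C. -/

import Mathlib

open Set Filter Topology MeasureTheory

/-! For integer `p = n`, the weights `e^{-a n t} = (e^{-a t})^n` are powers of a function with a
unique maximum on `[0, T]` at `t = 0`, so after normalization they are peak functions concentrating
at `0` and the weighted averages of `g` tend to `g 0`. The hypothesis bounds these averages by `C`
for all `n ≥ p₀`. -/

lemma tendsto_integral_exp_mul_div_integral_exp {T a : ℝ} (hT : 0 < T) (ha : 0 < a)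
    {g : ℝ → ℝ} (hg : ContinuousOn g (Icc 0 T)) :
    Tendsto (fun n : ℕ ↦ (∫ t in (0:ℝ)..T, Real.exp (-a * n * t) * g t) /
      ∫ t in (0:ℝ)..T, Real.exp (-a * n * t)) atTop (𝓝 (g 0)) := by
  have h₀ : (0 : ℝ) ∈ closure (interior (Icc 0 T)) := by
    rw [interior_Icc, closure_Ioo hT.ne]
    exact left_mem_Icc.2 hT.le
  have key := tendsto_setIntegral_pow_smul_of_unique_maximum_of_isCompact_of_continuousOn
    (μ := volume) isCompact_Icc (c := fun t ↦ Real.exp (-a * t)) (by fun_prop)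
    (fun t ht ht0 ↦ Real.exp_lt_exp.2 <| by
      have : 0 < t := lt_of_le_of_ne ht.1 (Ne.symm ht0)
      nlinarith)
    (fun t _ ↦ (Real.exp_pos _).le) (Real.exp_pos _) h₀ hg
  refine key.congr fun n ↦ ?_
  simp only [intervalIntegral.integral_of_le hT.le, ← integral_Icc_eq_integral_Ioc, smul_eq_mul,
    ← Real.exp_nat_mul, inv_mul_eq_div]
  ring_nf

lemma integral_exp_mul_pos {T : ℝ} (hT : 0 < T) (c : ℝ) :
    0 < ∫ t in (0:ℝ)..T, Real.exp (c * t) :=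
  intervalIntegral.intervalIntegral_pos_of_pos_on
    ((by fun_prop : Continuous fun t ↦ Real.exp (c * t)).intervalIntegrable _ _)
    (fun _ _ ↦ Real.exp_pos _) hT

theorem laplace_localization_general (T : ℝ) (hT : 0 < T) (g : ℝ → ℝ)
    (hcont : ContinuousOn g (Set.Icc 0 T))
    (C p₀ : ℝ)
    (h : ∀ p : ℝ, p₀ ≤ p →
      (∫ t in (0:ℝ)..T, Real.exp (-2 * p * t) * g t) ≤
        C * ∫ t in (0:ℝ)..T, Real.exp (-2 * p * t)) :
    g 0 ≤ C := by
  refine le_of_tendsto (tendsto_integral_exp_mul_div_integral_exp hT two_pos hcont) ?_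
  filter_upwards [eventually_ge_atTop ⌈p₀⌉₊] with n hn
  rw [div_le_iff₀ (integral_exp_mul_pos hT _)]
  exact h n (Nat.ceil_le.1 hn)

theorem laplace_localization (T : ℝ) (hT : 0 < T) (g : ℝ → ℝ)
    (hcont : ContinuousOn g (Set.Icc 0 T))
    (hnonneg : ∀ t ∈ Set.Icc (0:ℝ) T, 0 ≤ g t)
    (C p₀ : ℝ) (hC : 0 ≤ C) (hp₀ : 0 < p₀)
    (h : ∀ p : ℝ, p₀ ≤ p →
      (∫ t in (0:ℝ)..T, Real.exp (-2 * p * t) * g t) ≤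
        C * ∫ t in (0:ℝ)..T, Real.exp (-2 * p * t)) :
    g 0 ≤ C :=
  laplace_localization_general T hT g hcont C p₀ h
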